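/- arXiv:2405.19440 — 2 statements merged into one kernel-verified Lean document; each statement's English description precedes it below -/
import Mathlib

section
/- Let F : ℝ^m → ℝ^K be a matrix-valued map with Jacobian ∇F(x) ∈ ℝ^{m×K} at a point x, and let W be the probability simplex in ℝ^K. Let w* minimize w ↦ (1/2)‖∇F(x)w‖² over W and let w*_ρ minimize w ↦ (1/2)‖∇F(x)w‖² + (ρ/2)‖w‖² over W, for ρ > 0. Then ‖∇F(x)w* − ∇F(x)w*_ρ‖ ≤ √ρ. -/
open RealInnerProductSpace

/-- The probability simplex in `ℝ^K`. -/
def probSimplex (K : ℕ) : Set (EuclideanSpace ℝ (Fin K)) :=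
  {w | (∀ i, 0 ≤ w i) ∧ ∑ i, w i = 1}

lemma probSimplex_norm_sq_le_one {K : ℕ} {w : EuclideanSpace ℝ (Fin K)}
    (hw : w ∈ probSimplex K) : ‖w‖ ^ 2 ≤ 1 := by
  obtain ⟨hpos, hsum⟩ := hw
  have h1 : ∀ i, w i ≤ 1 := by
    intro i
    calc w i ≤ ∑ j, w j := Finset.single_le_sum (fun j _ => hpos j) (Finset.mem_univ i)
    _ = 1 := hsum
  have : ‖w‖ ^ 2 = ∑ i, (w i) ^ 2 := by
    rw [EuclideanSpace.norm_eq, Real.sq_sqrt (Finset.sum_nonneg fun i _ => sq_nonneg _)]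
    simp [Real.norm_eq_abs, sq_abs]
  rw [this, ← hsum]
  apply Finset.sum_le_sum
  intro i _
  nlinarith [hpos i, h1 i]

lemma probSimplex_convex_seg {K : ℕ} {u v : EuclideanSpace ℝ (Fin K)}
    (hu : u ∈ probSimplex K) (hv : v ∈ probSimplex K) {t : ℝ} (ht0 : 0 ≤ t) (ht1 : t ≤ 1) :
    u + t • (v - u) ∈ probSimplex K := by
  obtain ⟨hu0, hu1⟩ := hu
  obtain ⟨hv0, hv1⟩ := hv
  constructor
  · intro i
    have : (u + t • (v - u)) i = (1 - t) * u i + t * v i := by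
      simp [PiLp.add_apply, PiLp.smul_apply, PiLp.sub_apply, smul_eq_mul]
      ring
    rw [this]
    have := hu0 i; have := hv0 i
    nlinarith
  · have : ∀ i, (u + t • (v - u)) i = u i + t * (v i - u i) := by
      intro i
      simp [PiLp.add_apply, PiLp.smul_apply, PiLp.sub_apply, smul_eq_mul]
    simp only [this]
    rw [Finset.sum_add_distrib, hu1, ← Finset.mul_sum, Finset.sum_sub_distrib, hu1, hv1]
    ring

/-- if `w*` minimizes `(1/2)‖A w‖²` over the simplex and `w*_ρ` minimizes
`(1/2)‖A w‖² + (ρ/2)‖w‖²` over the simplex, then `‖A w* − A w*_ρ‖ ≤ √ρ`. -/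
theorem stmt0 {m K : ℕ}
    (A : EuclideanSpace ℝ (Fin K) →ₗ[ℝ] EuclideanSpace ℝ (Fin m))
    (ρ : ℝ) (hρ : 0 < ρ)
    (wstar wrho : EuclideanSpace ℝ (Fin K))
    (hwstar : wstar ∈ probSimplex K) (hwrho : wrho ∈ probSimplex K)
    (hmin : ∀ w ∈ probSimplex K, (1/2) * ‖A wstar‖^2 ≤ (1/2) * ‖A w‖^2)
    (hminrho : ∀ w ∈ probSimplex K,
      (1/2) * ‖A wrho‖^2 + (ρ/2) * ‖wrho‖^2 ≤ (1/2) * ‖A w‖^2 + (ρ/2) * ‖w‖^2) :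
    ‖A wstar - A wrho‖ ≤ Real.sqrt ρ := by
  set a := A wstar with ha
  set b := A wrho with hb
  -- key1 : ‖b‖² - ‖a‖² ≤ ρ
  have hns := probSimplex_norm_sq_le_one hwstar
  have hnr : (0:ℝ) ≤ ‖wrho‖ ^ 2 := sq_nonneg _
  have key1 : ‖b‖ ^ 2 - ‖a‖ ^ 2 ≤ ρ := by
    have := hminrho wstar hwstar
    nlinarith
  -- key2 : 0 ≤ ⟪a, b - a⟫
  set s := ⟪a, b - a⟫ with hs_def
  set c := ‖b - a‖ ^ 2 with hc_def
  have hstep : ∀ t : ℝ, 0 < t → t ≤ 1 → 0 ≤ 2 * s + t * c := by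
    intro t ht0 ht1
    have hmem := probSimplex_convex_seg hwstar hwrho ht0.le ht1
    have h := hmin _ hmem
    have hAw : A (wstar + t • (wrho - wstar)) = a + t • (b - a) := by
      simp [ha, hb, map_add, map_smul, map_sub]
    rw [hAw] at h
    have hexp : ‖a + t • (b - a)‖ ^ 2 = ‖a‖ ^ 2 + 2 * t * s + t ^ 2 * c := by
      rw [hs_def, hc_def, norm_add_sq_real, real_inner_smul_right, norm_smul]
      simp [abs_of_pos ht0]
      ring
    rw [hexp] at h
    have : 0 ≤ 2 * t * s + t ^ 2 * c := by linarith
    nlinarith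
  have hc0 : 0 ≤ c := sq_nonneg _
  have key2 : 0 ≤ s := by
    by_contra hneg
    push_neg at hneg
    rcases eq_or_lt_of_le hc0 with hc | hc
    · have := hstep 1 one_pos le_rfl
      rw [← hc] at this
      linarith
    · set t := min 1 (-s / c) with ht_def
      have ht0 : 0 < t := lt_min one_pos (div_pos (neg_pos.mpr hneg) hc)
      have ht1 : t ≤ 1 := min_le_left _ _
      have := hstep t ht0 ht1
      have htc : t * c ≤ -s := by
        have : t ≤ -s / c := min_le_right _ _
        calc t * c ≤ (-s / c) * c := by nlinarith
        _ = -s := by field_simp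
      linarith
  -- conclusion
  have hfinal : ‖a - b‖ ^ 2 ≤ ρ := by
    have hexp : ‖a - b‖ ^ 2 = ‖b‖ ^ 2 - ‖a‖ ^ 2 - 2 * s := by
      rw [hs_def, inner_sub_right, real_inner_self_eq_norm_sq, norm_sub_sq_real]
      ring
    rw [hexp]
    linarith
  have : ‖a - b‖ ≤ Real.sqrt ρ := by
    nlinarith [Real.sq_sqrt hρ.le, Real.sqrt_nonneg ρ, norm_nonneg (a - b)]
  exact this
end

section
/- Let ℓ : [0,∞) → (0,∞) be continuous and non-decreasing, and let f : ℝ^m → ℝ be twice continuously differentiable with ‖∇²f(x)‖ ≤ ℓ(‖∇f(x)‖) everywhere and f bounded below by f*. Then for every x, φ(‖∇f(x)‖) ≤ f(x) − f*, where φ(a) := a²/(2ℓ(2a)). -/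
/-!
Move from `x` against the gradient, to `y = x - ∇f(x) / L` with `L = ℓ(2‖∇f(x)‖)`, so that
`‖y - x‖ = ‖∇f(x)‖ / L`. As long as the gradient norm stays below `2‖∇f(x)‖` on the segment, the
Hessian is bounded by `L` there, so the gradient moves by at most `L‖y - x‖ = ‖∇f(x)‖` and cannot
reach `2‖∇f(x)‖` before the endpoint; by continuity the bound holds on all of `[x, y]`. Hence the
gradient is `L`-Lipschitz on `[x, y]`, and the usual descent lemma gives
`f* ≤ f(y) ≤ f(x) - ‖∇f(x)‖² / (2L)`.
-/

open Set

theorem ContinuousOn.forall_le_on_Icc_of_bootstrap {ψ : ℝ → ℝ} {a b c : ℝ}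
    (hψ : ContinuousOn ψ (Icc a b)) (ha : ψ a ≤ c)
    (hstep : ∀ t ∈ Ico a b, (∀ u ∈ Icc a t, ψ u ≤ c) → ψ t < c) :
    ∀ t ∈ Icc a b, ψ t ≤ c := by
  by_contra! ⟨t₁, ht₁, hct₁⟩
  have hclosed : IsClosed (Icc a b ∩ ψ ⁻¹' Ici c) :=
    hψ.preimage_isClosed_of_isClosed isClosed_Icc isClosed_Ici
  obtain ⟨s, ⟨hs, hcs⟩, hleast⟩ :=
    (isCompact_Icc.of_isClosed_subset hclosed inter_subset_left).exists_isLeast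
      ⟨t₁, ht₁, hct₁.le⟩
  have hbelow : ∀ u ∈ Ico a s, ψ u < c := fun u hu => by
    by_contra! h
    exact (hleast ⟨⟨hu.1, hu.2.le.trans hs.2⟩, h⟩).not_gt hu.2
  have hupto : ∀ u ∈ Icc a s, ψ u ≤ c := by
    rcases hs.1.eq_or_lt with rfl | has
    · intro u hu
      rw [Icc_self, mem_singleton_iff] at hu
      rwa [hu]
    · have hclosed' : IsClosed (Icc a s ∩ ψ ⁻¹' Iic c) :=
        (hψ.mono (Icc_subset_Icc_right hs.2)).preimage_isClosed_of_isClosed isClosed_Icc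
          isClosed_Iic
      have hsub := hclosed'.closure_subset_iff.2 fun u hu =>
        ⟨Ico_subset_Icc_self hu, (hbelow u hu).le⟩
      rw [closure_Ico has.ne] at hsub
      exact fun u hu => (hsub hu).2
  have hst₁ : s < t₁ := (hleast ⟨ht₁, hct₁.le⟩).lt_of_ne <| by
    rintro rfl
    exact (hupto s ⟨hs.1, le_rfl⟩).not_gt hct₁
  exact (hstep s ⟨hs.1, hst₁.trans_le ht₁.2⟩ hupto).not_ge hcs

section LSmooth

variable {E F : Type*} [NormedAddCommGroup E] [NormedSpace ℝ E] [NormedAddCommGroup F]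
  [NormedSpace ℝ F] {f : E → F} {ℓ : ℝ → ℝ}

theorem norm_fderiv_sub_le_of_forall_mem_segment (hdf : Differentiable ℝ (fderiv ℝ f))
    (hℓ : MonotoneOn ℓ (Ici 0))
    (hsmooth : ∀ y, ‖fderiv ℝ (fderiv ℝ f) y‖ ≤ ℓ ‖fderiv ℝ f y‖) {x z : E} {b : ℝ}
    (hb : ∀ w ∈ segment ℝ x z, ‖fderiv ℝ f w‖ ≤ b) :
    ‖fderiv ℝ f z - fderiv ℝ f x‖ ≤ ℓ b * ‖z - x‖ :=
  (convex_segment x z).norm_image_sub_le_of_norm_fderiv_le (fun w _ => hdf w)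
    (fun w hw => (hsmooth w).trans <| hℓ (norm_nonneg _)
      ((norm_nonneg _).trans (hb x (left_mem_segment ℝ x z))) (hb w hw))
    (left_mem_segment ℝ x z) (right_mem_segment ℝ x z)

theorem norm_fderiv_sub_le_of_norm_sub_le (hdf : Differentiable ℝ (fderiv ℝ f))
    (hℓ : MonotoneOn ℓ (Ici 0))
    (hsmooth : ∀ y, ‖fderiv ℝ (fderiv ℝ f) y‖ ≤ ℓ ‖fderiv ℝ f y‖) {x y : E}
    (hxy : ‖y - x‖ ≤ ‖fderiv ℝ f x‖ / ℓ (2 * ‖fderiv ℝ f x‖)) :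
    ‖fderiv ℝ f y - fderiv ℝ f x‖ ≤ ℓ (2 * ‖fderiv ℝ f x‖) * ‖y - x‖ := by
  set a := ‖fderiv ℝ f x‖
  set L := ℓ (2 * a)
  rcases (norm_nonneg (y - x)).eq_or_lt with hr | hr
  · rw [eq_comm, norm_eq_zero, sub_eq_zero] at hr
    simp [hr]
  obtain ⟨ha, hL⟩ : 0 < a ∧ 0 < L := (div_pos_iff.1 (hr.trans_le hxy)).resolve_right
    fun h => (norm_nonneg _).not_gt h.1
  have hLr : L * ‖y - x‖ ≤ a := by rwa [le_div_iff₀ hL, mul_comm] at hxy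
  let γ : ℝ → E := fun t => x + t • (y - x)
  have hsegment : ∀ t ∈ Icc (0 : ℝ) 1, (∀ u ∈ Icc 0 t, ‖fderiv ℝ f (γ u)‖ ≤ 2 * a) →
      ‖fderiv ℝ f (γ t) - fderiv ℝ f x‖ ≤ L * (t * ‖y - x‖) := by
    intro t ht hle
    have := norm_fderiv_sub_le_of_forall_mem_segment hdf hℓ hsmooth (x := x) (z := γ t)
      (b := 2 * a) fun w hw => by
        obtain ⟨θ, hθ, rfl⟩ := (segment_eq_image' ℝ x (γ t)) ▸ hw
        convert hle (θ * t) ⟨mul_nonneg hθ.1 ht.1, mul_le_of_le_one_left ht.1 hθ.2⟩ using 3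
        simp [γ, mul_smul]
    simpa [γ, norm_smul, abs_of_nonneg ht.1] using this
  have hbound : ∀ t ∈ Icc (0 : ℝ) 1, ‖fderiv ℝ f (γ t)‖ ≤ 2 * a := by
    refine ContinuousOn.forall_le_on_Icc_of_bootstrap ?_ ?_ fun t ht hle => ?_
    · exact (hdf.continuous.comp (by fun_prop)).norm.continuousOn
    · simp only [γ, a, zero_smul, add_zero]
      linarith
    · have hdist := hsegment t (Ico_subset_Icc_self ht) hle
      have htLr : t * (L * ‖y - x‖) < a := by nlinarith [ht.1, ht.2]
      calc ‖fderiv ℝ f (γ t)‖ ≤ a + ‖fderiv ℝ f (γ t) - fderiv ℝ f x‖ := norm_le_insert' _ _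
        _ < 2 * a := by linarith
  simpa [γ] using hsegment 1 ⟨zero_le_one, le_rfl⟩ hbound

end LSmooth

theorem image_le_add_fderiv_add_of_norm_fderiv_sub_le {E : Type*} [NormedAddCommGroup E]
    [NormedSpace ℝ E] {f : E → ℝ} (hf : Differentiable ℝ f) {x y : E} {L : ℝ}
    (hlip : ∀ z ∈ segment ℝ x y, ‖fderiv ℝ f z - fderiv ℝ f x‖ ≤ L * ‖z - x‖) :
    f y ≤ f x + fderiv ℝ f x (y - x) + L / 2 * ‖y - x‖ ^ 2 := by
  set r := ‖y - x‖
  set γ : ℝ → E := fun t => x + t • (y - x)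
  set g : ℝ → ℝ := fun t => f (γ t) - t * fderiv ℝ f x (y - x) - L / 2 * t ^ 2 * r ^ 2
  have hγ : ∀ t, HasDerivAt γ (y - x) t := fun t => by
    have h : HasDerivAt (fun t : ℝ => t • (y - x)) (y - x) t := by
      simpa using (hasDerivAt_id t).smul_const (y - x)
    exact h.const_add x
  have hg : ∀ t, HasDerivAt g
      (fderiv ℝ f (γ t) (y - x) - fderiv ℝ f x (y - x) - L * t * r ^ 2) t := fun t => by
    have := (((hf (γ t)).hasFDerivAt.comp_hasDerivAt t (hγ t)).sub
      ((hasDerivAt_id t).mul_const (fderiv ℝ f x (y - x)))).sub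
      (((hasDerivAt_pow 2 t).const_mul (L / 2)).mul_const (r ^ 2))
    exact this.congr_deriv (by simp only [Nat.cast_ofNat, Nat.add_one_sub_one, pow_one]; ring)
  have hg' : ∀ t ∈ interior (Icc (0 : ℝ) 1),
      fderiv ℝ f (γ t) (y - x) - fderiv ℝ f x (y - x) - L * t * r ^ 2 ≤ 0 := by
    intro t ht
    rw [interior_Icc] at ht
    have hγx : ‖γ t - x‖ = t * r := by simp [γ, r, norm_smul, abs_of_pos ht.1]
    have hmem : γ t ∈ segment ℝ x y := by
      rw [segment_eq_image']
      exact ⟨t, Ioo_subset_Icc_self ht, rfl⟩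
    suffices fderiv ℝ f (γ t) (y - x) - fderiv ℝ f x (y - x) ≤ L * t * r ^ 2 by linarith
    calc fderiv ℝ f (γ t) (y - x) - fderiv ℝ f x (y - x)
        = (fderiv ℝ f (γ t) - fderiv ℝ f x) (y - x) := rfl
      _ ≤ ‖fderiv ℝ f (γ t) - fderiv ℝ f x‖ * r :=
        (Real.le_norm_self _).trans (ContinuousLinearMap.le_opNorm _ _)
      _ ≤ L * (t * r) * r := by gcongr; exact hγx ▸ hlip _ hmem
      _ = L * t * r ^ 2 := by ring
  have hanti : AntitoneOn g (Icc 0 1) :=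
    antitoneOn_of_hasDerivWithinAt_nonpos (convex_Icc 0 1)
      (fun t _ => (hg t).continuousAt.continuousWithinAt) (fun t _ => (hg t).hasDerivWithinAt)
      hg'
  have h10 : g 1 ≤ g 0 :=
    hanti (left_mem_Icc.2 zero_le_one) (right_mem_Icc.2 zero_le_one) zero_le_one
  simp only [g, γ, zero_smul, one_smul, add_zero, add_sub_cancel, zero_mul, one_mul, one_pow,
    ne_eq, OfNat.ofNat_ne_zero, not_false_eq_true, zero_pow, mul_zero, mul_one, sub_zero] at h10
  linarith

theorem stmt4_general {m : ℕ}
    (f : EuclideanSpace ℝ (Fin m) → ℝ) (fstar : ℝ)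
    (hf : ContDiff ℝ 2 f)
    (hlower : ∀ x, fstar ≤ f x)
    (ℓ : ℝ → ℝ)
    (hℓpos : ∀ a, 0 ≤ a → 0 < ℓ a)
    (hℓmono : MonotoneOn ℓ (Set.Ici 0))
    (hsmooth : ∀ x, ‖iteratedFDeriv ℝ 2 f x‖ ≤ ℓ ‖gradient f x‖) :
    ∀ x, ‖gradient f x‖^2 / (2 * ℓ (2 * ‖gradient f x‖)) ≤ f x - fstar := by
  intro x
  have hnorm : ∀ y, ‖gradient f y‖ = ‖fderiv ℝ f y‖ := fun y =>
    (InnerProductSpace.toDual ℝ _).symm.norm_map _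
  have hdf : Differentiable ℝ (fderiv ℝ f) :=
    (hf.fderiv_right (m := 1) le_rfl).differentiable one_ne_zero
  have hsmooth' : ∀ y, ‖fderiv ℝ (fderiv ℝ f) y‖ ≤ ℓ ‖fderiv ℝ f y‖ := fun y => by
    rw [← norm_iteratedFDeriv_one, norm_iteratedFDeriv_fderiv, ← hnorm]
    exact hsmooth y
  set a := ‖gradient f x‖
  set L := ℓ (2 * a)
  have hL : 0 < L := hℓpos _ (by positivity)
  set y := x - L⁻¹ • gradient f x
  have hyx : ‖y - x‖ = a / L := by simp [y, a, norm_smul, abs_of_pos hL, div_eq_inv_mul]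
  have hlip : ∀ z ∈ segment ℝ x y, ‖fderiv ℝ f z - fderiv ℝ f x‖ ≤ L * ‖z - x‖ :=
    fun z hz => by
      have := norm_fderiv_sub_le_of_norm_sub_le hdf hℓmono hsmooth' (x := x) (y := z) ?_
      · rwa [← hnorm] at this
      · rw [← hnorm, ← hyx]
        exact norm_sub_le_of_mem_segment hz
  have hdescent :=
    image_le_add_fderiv_add_of_norm_fderiv_sub_le (hf.differentiable two_ne_zero) hlip
  have hlin : fderiv ℝ f x (y - x) = -(a ^ 2 / L) := by
    rw [← inner_gradient_left]
    simp [y, a, inner_smul_right, div_eq_inv_mul]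
  rw [hlin, hyx] at hdescent
  have hquad : a ^ 2 / (2 * L) = a ^ 2 / L - L / 2 * (a / L) ^ 2 := by field_simp; ring
  linarith [hlower y]

/-- for an `ℓ`-smooth function `f` bounded below by `f*`,
`φ(‖∇f(x)‖) ≤ f(x) − f*` where `φ(a) = a²/(2ℓ(2a))`. -/
theorem stmt4 {m : ℕ}
    (f : EuclideanSpace ℝ (Fin m) → ℝ) (fstar : ℝ)
    (hf : ContDiff ℝ 2 f)
    (hlower : ∀ x, fstar ≤ f x)
    (ℓ : ℝ → ℝ)
    (hℓpos : ∀ a, 0 ≤ a → 0 < ℓ a)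
    (hℓcont : ContinuousOn ℓ (Set.Ici 0))
    (hℓmono : MonotoneOn ℓ (Set.Ici 0))
    (hsmooth : ∀ x, ‖iteratedFDeriv ℝ 2 f x‖ ≤ ℓ ‖gradient f x‖) :
    ∀ x, ‖gradient f x‖^2 / (2 * ℓ (2 * ‖gradient f x‖)) ≤ f x - fstar :=
  stmt4_general f fstar hf hlower ℓ hℓpos hℓmono hsmooth
end
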